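/- arXiv:2309.09961 — 8 statements merged into one kernel-verified Lean document; each statement's English description precedes it below -/
import Mathlib

section
/- For every integer k ≥ 0, the sum of the entries of the vector π^(k) equals β_{k+1} - 2, where β_i = 1 + (1+√2)^{i-1} and π^(k) ∈ ℝ^{2^k - 1} has i-th entry β_{ν(i)}, with ν(i) the 2-adic valuation of i (the largest power of 2 dividing i). -/
/-- β_i = 1 + (1+√2)^{i-1} (real exponent). -/
noncomputable def beta (i : ℕ) : ℝ := 1 + (1 + Real.sqrt 2) ^ ((i : ℝ) - 1)

lemma helper1 (f : ℕ → ℝ) (n : ℕ) :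
    ∑ i ∈ Finset.range (n+1), f i = f 0 + ∑ i ∈ Finset.Icc 1 n, f i := by
  induction n with
  | zero => simp
  | succ n ih =>
    rw [Finset.sum_range_succ, ih, Finset.sum_Icc_succ_top (by omega)]
    ring

lemma helper2 (f : ℕ → ℝ) (n : ℕ) :
    ∑ i ∈ Finset.range (2*n), f i
      = ∑ m ∈ Finset.range n, f (2*m) + ∑ m ∈ Finset.range n, f (2*m+1) := by
  induction n with
  | zero => simp
  | succ n ih =>
    have h : 2*(n+1) = 2*n+1+1 := by ring
    rw [h, Finset.sum_range_succ, Finset.sum_range_succ, ih,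
        Finset.sum_range_succ, Finset.sum_range_succ]
    ring

/-- the sum of the entries of π^(k), whose i-th entry (1 ≤ i ≤ 2^k - 1)
is β_{ν(i)} with ν the 2-adic valuation, equals β_{k+1} - 2. -/
theorem stmt1 (k : ℕ) :
    ∑ i ∈ Finset.Icc 1 (2 ^ k - 1), beta (padicValNat 2 i) = beta (k + 1) - 2 := by
  have hs0 : Real.sqrt 2 ^ 2 = 2 := Real.sq_sqrt (by norm_num)
  have hspos : (0:ℝ) < 1 + Real.sqrt 2 := by positivity
  have hsne : (1 + Real.sqrt 2 : ℝ) ≠ 0 := ne_of_gt hspos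
  induction k with
  | zero => norm_num [beta]
  | succ k ih =>
    set f : ℕ → ℝ := fun i => beta (padicValNat 2 i) with hf
    have hn : (1:ℕ) ≤ 2^k := Nat.one_le_two_pow
    have e1 : 2 ^ (k+1) - 1 + 1 = 2 * 2^k := by
      have : (2:ℕ)^(k+1) = 2*2^k := by ring
      omega
    have key : ∑ i ∈ Finset.Icc 1 (2 ^ (k+1) - 1), f i
        = ∑ m ∈ Finset.Icc 1 (2^k - 1), f (2*m) + ∑ m ∈ Finset.range (2^k), f (2*m+1) := by
      have h1 := helper1 f (2^(k+1) - 1)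
      rw [e1] at h1
      have h2 := helper1 (fun m => f (2*m)) (2^k - 1)
      have e2 : 2^k - 1 + 1 = 2^k := by omega
      rw [e2] at h2
      have h3 := helper2 f (2^k)
      simp only [mul_zero] at h2
      rw [h3, h2] at h1
      linarith [h1]
    rw [key]
    -- odd terms: padicValNat 2 (2m+1) = 0
    have hodd : ∑ m ∈ Finset.range (2^k), f (2*m+1) = (2^k : ℝ) * beta 0 := by
      have step : ∀ m ∈ Finset.range (2^k), f (2*m+1) = beta 0 := by
        intro m _
        have : padicValNat 2 (2*m+1) = 0 :=
          padicValNat.eq_zero_of_not_dvd (by omega)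
        simp [hf, this]
      rw [Finset.sum_congr rfl step, Finset.sum_const, Finset.card_range, nsmul_eq_mul]
      push_cast
      ring
    -- even terms
    have heven : ∑ m ∈ Finset.Icc 1 (2^k - 1), f (2*m)
        = (1 + Real.sqrt 2) * (∑ m ∈ Finset.Icc 1 (2^k - 1), f m)
          + ((2^k - 1 : ℕ) : ℝ) * (1 - (1 + Real.sqrt 2)) := by
      have step : ∀ m ∈ Finset.Icc 1 (2^k - 1),
          f (2*m) = (1 + Real.sqrt 2) * f m + (1 - (1 + Real.sqrt 2)) := by
        intro m hm
        simp only [Finset.mem_Icc] at hm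
        have hm0 : m ≠ 0 := by omega
        have hv : padicValNat 2 (2*m) = padicValNat 2 m + 1 := by
          have := padicValNat.mul (p := 2) (two_ne_zero) hm0
          rw [this, padicValNat.self (by norm_num)]
          ring
        simp only [hf, hv, beta]
        have hcast : ((padicValNat 2 m + 1 : ℕ) : ℝ) - 1 = ((padicValNat 2 m : ℕ) : ℝ) - 1 + 1 := by
          push_cast; ring
        rw [hcast, Real.rpow_add_one hsne]
        ring
      rw [Finset.sum_congr rfl step, Finset.sum_add_distrib, Finset.sum_const,
        ← Finset.mul_sum, Nat.card_Icc, nsmul_eq_mul]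
      norm_num
    rw [hodd, heven, ih]
    have hbeta0 : beta 0 = Real.sqrt 2 := by
      simp only [beta, Nat.cast_zero, zero_sub]
      rw [show (-1:ℝ) = ((-1:ℤ):ℝ) by norm_num, Real.rpow_intCast, zpow_neg_one]
      have : (1 + Real.sqrt 2) * (Real.sqrt 2 - 1) = 1 := by nlinarith [hs0]
      field_simp
      nlinarith [hs0]
    have hb1 : beta (k+1) = 1 + (1 + Real.sqrt 2) ^ ((k:ℝ)) := by
      simp only [beta]; push_cast; ring_nf
    have hb2 : beta (k+1+1) = 1 + (1 + Real.sqrt 2) ^ ((k:ℝ)) * (1 + Real.sqrt 2) := by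
      simp only [beta]
      rw [show ((k+1+1:ℕ):ℝ) - 1 = (k:ℝ) + 1 by push_cast; ring, Real.rpow_add_one hsne]
    rw [hbeta0, hb1, hb2]
    have hc : ((2^k - 1 : ℕ) : ℝ) = (2^k : ℝ) - 1 := by
      push_cast [Nat.cast_sub hn]; norm_num
    rw [hc]
    set X := (1 + Real.sqrt 2) ^ ((k:ℝ))
    nlinarith [hs0]
end

section
/- For every integer k ≥ 0, ∑_{i=0}^{k-2} 2(2^{k-i-1} - 1)(1 + (1+√2)^{i-1}) = √2((1+√2)^k - 1) - 2k. -/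
/-- for every integer k ≥ 0,
∑_{i=0}^{k-2} 2(2^{k-i-1} - 1)(1 + (1+√2)^{i-1}) = √2((1+√2)^k - 1) - 2k. -/
theorem stmt3 (k : ℕ) :
    ∑ i ∈ Finset.range (k - 1),
        2 * ((2 : ℝ) ^ (k - i - 1) - 1) * (1 + (1 + Real.sqrt 2) ^ ((i : ℝ) - 1))
      = Real.sqrt 2 * ((1 + Real.sqrt 2) ^ k - 1) - 2 * (k : ℝ) := by
  rcases k with _ | n
  · simp
  set s := Real.sqrt 2 with hs
  have hs2 : s ^ 2 = 2 := Real.sq_sqrt (by norm_num)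
  have hspos : (0:ℝ) < s := Real.sqrt_pos.mpr (by norm_num)
  set a : ℝ := 1 + s with hadef
  have ha : (0:ℝ) < a := by positivity
  have ha0 : a ≠ 0 := ne_of_gt ha
  have ha1 : a ≠ 1 := by
    intro h
    have : s = 0 := by linarith [congrArg (· - 1) h]
    exact absurd this (ne_of_gt hspos)
  have ha2 : a / 2 ≠ 1 := by
    intro h
    have hsv : s = 1 := by
      have : a = 2 := by linarith [ (div_eq_one_iff_eq (two_ne_zero)).mp h ]
      linarith [this]
    rw [hsv] at hs2; norm_num at hs2
  have hrange : n + 1 - 1 = n := rfl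
  rw [hrange]
  have hterm : ∀ i ∈ Finset.range n,
      2 * ((2:ℝ) ^ (n + 1 - i - 1) - 1) * (1 + a ^ ((i : ℝ) - 1))
        = (2 * 2 ^ n) * ((1/2:ℝ)) ^ i + (2 * 2 ^ n / a) * (a/2) ^ i
            + (-2/a) * a ^ i + (-2) := by
    intro i hi
    have hi' : i ≤ n := le_of_lt (Finset.mem_range.mp hi)
    have h1 : n + 1 - i - 1 = n - i := by omega
    have h2 : (2:ℝ) ^ (n - i) = 2 ^ n / 2 ^ i := by
      rw [pow_sub₀ (2:ℝ) (by norm_num) hi', div_eq_mul_inv]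
    have h3 : a ^ ((i:ℝ) - 1) = a ^ i / a := by
      rw [show ((i:ℝ) - 1) = (i:ℝ) - (1:ℝ) from rfl, Real.rpow_sub ha,
        Real.rpow_one, Real.rpow_natCast]
    rw [h1, h2, h3]
    have h2i : (2:ℝ) ^ i ≠ 0 := by positivity
    rw [one_div, inv_pow, div_pow]
    field_simp
    ring
  rw [Finset.sum_congr rfl hterm]
  simp only [Finset.sum_add_distrib, ← Finset.mul_sum, Finset.sum_const,
    Finset.card_range, nsmul_eq_mul]
  rw [geom_sum_eq (by norm_num : (1/2:ℝ) ≠ 1), geom_sum_eq ha2, geom_sum_eq ha1]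
  have hdp : ((1:ℝ)/2) ^ n = 1 / 2 ^ n := by rw [div_pow, one_pow]
  have hdp2 : (a/2) ^ n = a ^ n / 2 ^ n := by rw [div_pow]
  have hpow : a ^ (n+1) = a ^ n * a := pow_succ a n
  rw [hdp, hdp2, hpow]
  have h2n : (2:ℝ) ^ n ≠ 0 := by positivity
  have hsa : a - 1 ≠ 0 := by intro h; exact ha1 (by linarith)
  have hsa2 : a / 2 - 1 ≠ 0 := by intro h; exact ha2 (by linarith)
  have h3 : s ^ 3 = 2 * s := by rw [pow_succ, hs2]
  have h4 : s ^ 4 = 4 := by rw [show (4:ℕ) = 2*2 from rfl, pow_mul, hs2]; norm_num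
  have hsa3 : a - 2 ≠ 0 := by intro h; exact ha2 (by field_simp; linarith)
  have hsa4 : -2 + a ≠ 0 := by intro h; exact hsa3 (by linarith)
  have h5 : s ^ 5 = 4 * s := by rw [pow_succ, h4]
  field_simp
  simp only [hadef]
  ring_nf
  simp only [hs2, h3, h4, h5]
  push_cast
  ring
end

section
/- For all integers ℓ ≥ 0, μ_ℓ = 2(α_ℓ - 1)^2/(β_{ℓ+1} - α_ℓ) + 1 and μ_{ℓ+1} = 2(β_{ℓ+1} - 1)^2/(β_{ℓ+1} - α_ℓ) + 1. In particular, √(μ_ℓ - 1)/(α_ℓ - 1) = √(μ_{ℓ+1} - 1)/(β_{ℓ+1} - 1). -/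
lemma sqrt2_sq : Real.sqrt 2 ^ 2 = 2 := Real.sq_sqrt (by norm_num)

lemma beta_succ (i : ℕ) : beta (i + 1) = 1 + (1 + Real.sqrt 2) ^ i := by
  unfold beta
  rw [show ((i + 1 : ℕ) : ℝ) - 1 = ((i : ℕ) : ℝ) by push_cast; ring, Real.rpow_natCast]

lemma beta_zero : beta 0 = Real.sqrt 2 := by
  unfold beta
  rw [show ((0 : ℕ) : ℝ) - 1 = -1 by norm_num, Real.rpow_neg_one]
  have h : (1 + Real.sqrt 2)⁻¹ = Real.sqrt 2 - 1 := by
    rw [inv_eq_of_mul_eq_one_left]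
    nlinarith [sqrt2_sq]
  rw [h]; ring

lemma beta_pos (i : ℕ) : 0 < beta i := by
  unfold beta
  have := Real.rpow_pos_of_pos (show (0:ℝ) < 1 + Real.sqrt 2 by positivity) ((i : ℝ) - 1)
  linarith

lemma s_pow_rec (m : ℕ) : (1 + Real.sqrt 2) ^ (m + 2)
    = 2 * (1 + Real.sqrt 2) ^ (m + 1) + (1 + Real.sqrt 2) ^ m := by
  have h : (1 + Real.sqrt 2) ^ 2 = 2 * (1 + Real.sqrt 2) + 1 := by nlinarith [sqrt2_sq]
  calc (1 + Real.sqrt 2) ^ (m + 2) = (1 + Real.sqrt 2) ^ m * (1 + Real.sqrt 2) ^ 2 := by ring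
    _ = (1 + Real.sqrt 2) ^ m * (2 * (1 + Real.sqrt 2) + 1) := by rw [h]
    _ = _ := by ring

lemma Usum (m : ℕ) : ∑ ℓ ∈ Finset.range (m + 1), (2:ℝ) ^ (m - ℓ) * beta ℓ
    = (1 + Real.sqrt 2) ^ (m + 1) - 1 := by
  induction m with
  | zero => simp [beta_zero]
  | succ m ih =>
    rw [Finset.sum_range_succ]
    have h1 : ∀ ℓ ∈ Finset.range (m + 1),
        (2:ℝ) ^ (m + 1 - ℓ) * beta ℓ = 2 * ((2:ℝ) ^ (m - ℓ) * beta ℓ) := by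
      intro ℓ hℓ
      rw [Finset.mem_range] at hℓ
      rw [show m + 1 - ℓ = (m - ℓ) + 1 by omega, pow_succ]; ring
    rw [Finset.sum_congr rfl h1, ← Finset.mul_sum, ih,
      show m + 1 - (m + 1) = 0 by omega, beta_succ, pow_zero]
    have := s_pow_rec m
    linarith

lemma Grec (m : ℕ) : ∑ ℓ ∈ Finset.range (m + 1), 2 * ((2:ℝ) ^ (m + 1 - ℓ) - 1) * beta ℓ
    = ∑ ℓ ∈ Finset.range m, 2 * ((2:ℝ) ^ (m - ℓ) - 1) * beta ℓ
      + (2 * (1 + Real.sqrt 2) ^ (m + 1) - 2) := by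
  have h1 : ∀ ℓ ∈ Finset.range (m + 1),
      2 * ((2:ℝ) ^ (m + 1 - ℓ) - 1) * beta ℓ
        = 2 * ((2:ℝ) ^ (m - ℓ) - 1) * beta ℓ + 2 * ((2:ℝ) ^ (m - ℓ) * beta ℓ) := by
    intro ℓ hℓ
    rw [Finset.mem_range] at hℓ
    rw [show m + 1 - ℓ = (m - ℓ) + 1 by omega, pow_succ]; ring
  rw [Finset.sum_congr rfl h1, Finset.sum_add_distrib, ← Finset.mul_sum, Usum,
    Finset.sum_range_succ, show m - m = 0 by omega, pow_zero]
  ring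

lemma mu_eq (α μ : ℕ → ℝ)
    (hμ : ∀ i, μ i = 2 * ∑ ℓ ∈ Finset.range i, α ℓ
        + ∑ ℓ ∈ Finset.range (i - 1), 2 * ((2 : ℝ) ^ (i - ℓ - 1) - 1) * beta ℓ + 2)
    (i : ℕ) :
    μ i = 2 * ∑ ℓ ∈ Finset.range i, α ℓ
        + ∑ ℓ ∈ Finset.range (i - 1), 2 * ((2 : ℝ) ^ (i - 1 - ℓ) - 1) * beta ℓ + 2 := by
  rw [hμ i]
  congr 2
  exact Finset.sum_congr rfl fun ℓ _ => by rw [show i - ℓ - 1 = i - 1 - ℓ by omega]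

lemma mu_rec (α μ : ℕ → ℝ)
    (hμ : ∀ i, μ i = 2 * ∑ ℓ ∈ Finset.range i, α ℓ
        + ∑ ℓ ∈ Finset.range (i - 1), 2 * ((2 : ℝ) ^ (i - ℓ - 1) - 1) * beta ℓ + 2)
    (i : ℕ) :
    μ (i + 1) = μ i + 2 * α i + 2 * beta (i + 1) - 4 := by
  rcases i with _ | m
  · rw [mu_eq α μ hμ 1, mu_eq α μ hμ 0, beta_succ]
    simp
    ring
  · rw [mu_eq α μ hμ (m + 2), mu_eq α μ hμ (m + 1)]
    have e1 : (m + 2) - 1 = m + 1 := by omega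
    have e2 : (m + 1) - 1 = m := by omega
    rw [e1, e2, Finset.sum_range_succ (f := α) (n := m + 1), Grec, beta_succ]
    ring

lemma mu_ge (α μ : ℕ → ℝ)
    (hμ : ∀ i, μ i = 2 * ∑ ℓ ∈ Finset.range i, α ℓ
        + ∑ ℓ ∈ Finset.range (i - 1), 2 * ((2 : ℝ) ^ (i - ℓ - 1) - 1) * beta ℓ + 2)
    (hα1 : ∀ i, 1 < α i) (i : ℕ) : 2 ≤ μ i := by
  rw [hμ i]
  have h1 : 0 ≤ ∑ ℓ ∈ Finset.range i, α ℓ :=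
    Finset.sum_nonneg fun ℓ _ => le_of_lt (lt_trans one_pos (hα1 ℓ))
  have h2 : 0 ≤ ∑ ℓ ∈ Finset.range (i - 1), 2 * ((2:ℝ) ^ (i - ℓ - 1) - 1) * beta ℓ := by
    refine Finset.sum_nonneg fun ℓ _ => ?_
    have hb := beta_pos ℓ
    have : (1:ℝ) ≤ 2 ^ (i - ℓ - 1) := one_le_pow₀ (by norm_num)
    nlinarith
  linarith

/-- for all ℓ ≥ 0,
μ_ℓ = 2(α_ℓ - 1)²/(β_{ℓ+1} - α_ℓ) + 1 and
μ_{ℓ+1} = 2(β_{ℓ+1} - 1)²/(β_{ℓ+1} - α_ℓ) + 1, hence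
√(μ_ℓ - 1)/(α_ℓ - 1) = √(μ_{ℓ+1} - 1)/(β_{ℓ+1} - 1). -/
theorem stmt5 (α μ : ℕ → ℝ)
    (hμ : ∀ i, μ i = 2 * ∑ ℓ ∈ Finset.range i, α ℓ
        + ∑ ℓ ∈ Finset.range (i - 1), 2 * ((2 : ℝ) ^ (i - ℓ - 1) - 1) * beta ℓ + 2)
    (hα : ∀ i, 1 < α i ∧
      2 * (α i - 1) ^ 2 + (μ i - 1) * (α i - 1) - (beta (i + 1) - 1) * (μ i - 1) = 0) :
    ∀ ℓ : ℕ,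
      μ ℓ = 2 * (α ℓ - 1) ^ 2 / (beta (ℓ + 1) - α ℓ) + 1 ∧
      μ (ℓ + 1) = 2 * (beta (ℓ + 1) - 1) ^ 2 / (beta (ℓ + 1) - α ℓ) + 1 ∧
      Real.sqrt (μ ℓ - 1) / (α ℓ - 1)
        = Real.sqrt (μ (ℓ + 1) - 1) / (beta (ℓ + 1) - 1) := by
  intro ℓ
  obtain ⟨ha, hq⟩ := hα ℓ
  set a := α ℓ with hadef
  set b := beta (ℓ + 1) with hbdef
  have hm : 2 ≤ μ ℓ := mu_ge α μ hμ (fun i => (hα i).1) ℓ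
  have key : (μ ℓ - 1) * (b - a) = 2 * (a - 1) ^ 2 := by linear_combination (-1) * hq
  have hsq : 0 < (a - 1) ^ 2 := pow_pos (by linarith) 2
  have hba : 0 < b - a := by nlinarith
  have hba' : b - a ≠ 0 := ne_of_gt hba
  have part1 : μ ℓ = 2 * (a - 1) ^ 2 / (b - a) + 1 := by
    have h : 2 * (a - 1) ^ 2 / (b - a) = μ ℓ - 1 := by
      rw [div_eq_iff hba']; linear_combination -key
    linarith
  have hrec : μ (ℓ + 1) = μ ℓ + 2 * a + 2 * b - 4 := mu_rec α μ hμ ℓ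
  have part2 : μ (ℓ + 1) = 2 * (b - 1) ^ 2 / (b - a) + 1 := by
    have h : 2 * (b - 1) ^ 2 / (b - a) = μ (ℓ + 1) - 1 := by
      rw [div_eq_iff hba', hrec]; linear_combination -key
    linarith
  refine ⟨part1, part2, ?_⟩
  have hb1 : 1 < b := by linarith
  have m1 : μ ℓ - 1 = (a - 1) ^ 2 * (2 / (b - a)) := by rw [part1]; ring
  have m2 : μ (ℓ + 1) - 1 = (b - 1) ^ 2 * (2 / (b - a)) := by rw [part2]; ring
  rw [m1, m2, Real.sqrt_mul (sq_nonneg _), Real.sqrt_mul (sq_nonneg _),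
    Real.sqrt_sq (by linarith : (0:ℝ) ≤ a - 1), Real.sqrt_sq (by linarith : (0:ℝ) ≤ b - 1),
    mul_div_cancel_left₀ _ (by linarith : a - 1 ≠ 0),
    mul_div_cancel_left₀ _ (by linarith : b - 1 ≠ 0)]
end

section
/- For all integers k ≥ 1, 2(β_k - 1) + √((μ_{k-1}-1)(μ_k-1)) = μ_k - 1, i.e., 2(1+√2)^{k-1} + √((μ_{k-1}-1)(μ_k-1)) = μ_k - 1. -/
lemma beta_sub_one (k : ℕ) : beta k - 1 = (1 + Real.sqrt 2) ^ ((k : ℝ) - 1) := by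
  rw [beta, add_sub_cancel_left]

lemma one_le_beta (k : ℕ) : 1 ≤ beta k := by
  have h := beta_sub_one k
  have : 0 ≤ (1 + Real.sqrt 2) ^ ((k : ℝ) - 1) := by positivity
  linarith

lemma mul_add_eq_sq_of_quadratic {a b m : ℝ} (hq : 2 * a ^ 2 + m * a - b * m = 0) :
    m * (m + 2 * a + 2 * b) = (m + 2 * a) ^ 2 := by
  linear_combination (-2 : ℝ) * hq

lemma two_mul_add_sqrt_eq_of_quadratic {a b m : ℝ} (ha : 0 ≤ a) (hm : 0 ≤ m)
    (hq : 2 * a ^ 2 + m * a - b * m = 0) :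
    2 * b + Real.sqrt (m * (m + 2 * a + 2 * b)) = m + 2 * a + 2 * b := by
  rw [mul_add_eq_sq_of_quadratic hq, Real.sqrt_sq (by linarith)]
  ring

lemma two_le_of_recurrence {α μ : ℕ → ℝ} (hμ0 : μ 0 = 2)
    (hμ : ∀ i, μ (i + 1) = μ i + 2 * (α i + beta (i + 1) - 2)) (hα : ∀ i, 1 < α i) (i : ℕ) :
    2 ≤ μ i := by
  have hmono : Monotone μ := monotone_nat_of_le_succ fun n => by
    rw [hμ n]
    linarith [hα n, one_le_beta (n + 1)]
  exact hμ0 ▸ hmono (Nat.zero_le i)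

/-- for all k ≥ 1,
2(β_k - 1) + √((μ_{k-1}-1)(μ_k-1)) = μ_k - 1, i.e.
2(1+√2)^{k-1} + √((μ_{k-1}-1)(μ_k-1)) = μ_k - 1. -/
theorem stmt6 (α μ : ℕ → ℝ)
    (hμ0 : μ 0 = 2)
    (hμ : ∀ i, μ (i + 1) = μ i + 2 * (α i + beta (i + 1) - 2))
    (hα : ∀ i, 1 < α i ∧
      2 * (α i - 1) ^ 2 + (μ i - 1) * (α i - 1) - (beta (i + 1) - 1) * (μ i - 1) = 0) :
    ∀ k : ℕ, 1 ≤ k →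
      (2 * (beta k - 1) + Real.sqrt ((μ (k - 1) - 1) * (μ k - 1)) = μ k - 1) ∧
      (2 * (1 + Real.sqrt 2) ^ ((k : ℝ) - 1)
        + Real.sqrt ((μ (k - 1) - 1) * (μ k - 1)) = μ k - 1) := by
  intro k hk
  obtain ⟨i, rfl⟩ : ∃ i, k = i + 1 := ⟨k - 1, by omega⟩
  have hstep : μ (i + 1) - 1 = (μ i - 1) + 2 * (α i - 1) + 2 * (beta (i + 1) - 1) := by
    rw [hμ i]; ring
  have hmain : 2 * (beta (i + 1) - 1) + Real.sqrt ((μ i - 1) * (μ (i + 1) - 1)) =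
      μ (i + 1) - 1 := by
    rw [hstep]
    exact two_mul_add_sqrt_eq_of_quadratic (by linarith [(hα i).1])
      (by linarith [two_le_of_recurrence hμ0 hμ (fun j => (hα j).1) i]) (hα i).2
  rw [Nat.add_sub_cancel, ← beta_sub_one]
  exact ⟨hmain, hmain⟩
end

section
/- For all integers k ≥ 1: (i) β_k ≤ α_k ≤ β_{k+1}; (ii) 2√2(1+√2)^k ≤ H_k ≤ 4√2(1+√2)^k where H_k is the sum of all entries of the building block pattern 𝔥^(k); (iii) √2(1+√2)^k ≤ μ_k - 1 ≤ 2√2(1+√2)^k; (iv) (2-√2)(1+√2)^{k-1} ≤ μ_k - μ_{k-1}. -/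
namespace Stmt7Aux

lemma hs0 : (0:ℝ) < Real.sqrt 2 := Real.sqrt_pos.mpr (by norm_num)
lemma hs2 : (Real.sqrt 2) ^ 2 = 2 := Real.sq_sqrt (by norm_num)
lemma hs1 : (1:ℝ) < Real.sqrt 2 := by nlinarith [hs2, hs0]
lemma hr0 : (0:ℝ) < 1 + Real.sqrt 2 := by nlinarith [hs0]

lemma betaEq (i : ℕ) :
    beta i = 1 + (Real.sqrt 2 - 1) * (1 + Real.sqrt 2) ^ i := by
  set s := Real.sqrt 2
  have h : ((i:ℝ) - 1) = (i:ℝ) + (-1) := by ring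
  have hinv : (1 + s)⁻¹ = s - 1 :=
    inv_eq_of_mul_eq_one_right (by nlinarith [hs2])
  rw [beta, h, Real.rpow_add hr0, Real.rpow_natCast, Real.rpow_neg_one, hinv]
  ring

lemma sumBeta (i : ℕ) :
    ∑ ℓ ∈ Finset.range i, beta ℓ
      = i + (2 - Real.sqrt 2)/2 * ((1 + Real.sqrt 2) ^ i - 1) := by
  set s := Real.sqrt 2 with hs
  induction i with
  | zero => simp
  | succ n ih =>
      rw [Finset.sum_range_succ, ih, betaEq, pow_succ]
      push_cast
      linear_combination ((1+s)^n/2) * hs2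

lemma sumD (i : ℕ) :
    ∑ ℓ ∈ Finset.range i, 2 * ((2:ℝ) ^ (i - ℓ) - 1) * beta ℓ
      = (2 + Real.sqrt 2) * (1 + Real.sqrt 2) ^ i - 2*(i+1) - Real.sqrt 2 := by
  set s := Real.sqrt 2 with hs
  induction i with
  | zero => simp
  | succ n ih =>
      rw [Finset.sum_range_succ]
      have hterm : ∀ ℓ ∈ Finset.range n,
          2 * ((2:ℝ) ^ (n + 1 - ℓ) - 1) * beta ℓ
            = 2 * (2 * ((2:ℝ) ^ (n - ℓ) - 1) * beta ℓ) + 2 * beta ℓ := by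
        intro ℓ hℓ
        have hl : ℓ < n := Finset.mem_range.mp hℓ
        have h : n + 1 - ℓ = (n - ℓ) + 1 := by omega
        rw [h, pow_succ]; ring
      rw [Finset.sum_congr rfl hterm, Finset.sum_add_distrib, ← Finset.mul_sum,
        ← Finset.mul_sum, ih, sumBeta, betaEq]
      have h1 : n + 1 - n = 1 := by omega
      rw [h1, pow_succ]
      push_cast
      linear_combination (-(1+s)^n) * hs2

end Stmt7Aux

/-- for all k ≥ 1:
(i) β_k ≤ α_k ≤ β_{k+1};
(ii) 2√2(1+√2)^k ≤ H_k ≤ 4√2(1+√2)^k, where H_k is the total of the pattern 𝔥^(k)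
    (equivalently H_k = 2μ_k - 2, the middle entry μ_k being the sum of all other
    entries plus two);
(iii) √2(1+√2)^k ≤ μ_k - 1 ≤ 2√2(1+√2)^k;
(iv) (2-√2)(1+√2)^{k-1} ≤ μ_k - μ_{k-1}. -/
theorem stmt7 (α μ H : ℕ → ℝ)
    (hμ : ∀ i, μ i = 2 * ∑ ℓ ∈ Finset.range i, α ℓ
        + ∑ ℓ ∈ Finset.range (i - 1), 2 * ((2 : ℝ) ^ (i - ℓ - 1) - 1) * beta ℓ + 2)
    (hα : ∀ i, 1 < α i ∧
      2 * (α i - 1) ^ 2 + (μ i - 1) * (α i - 1) - (beta (i + 1) - 1) * (μ i - 1) = 0)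
    (hH : ∀ k, H k = 2 * μ k - 2) :
    ∀ k : ℕ, 1 ≤ k →
      (beta k ≤ α k ∧ α k ≤ beta (k + 1)) ∧
      (2 * Real.sqrt 2 * (1 + Real.sqrt 2) ^ k ≤ H k ∧
        H k ≤ 4 * Real.sqrt 2 * (1 + Real.sqrt 2) ^ k) ∧
      (Real.sqrt 2 * (1 + Real.sqrt 2) ^ k ≤ μ k - 1 ∧
        μ k - 1 ≤ 2 * Real.sqrt 2 * (1 + Real.sqrt 2) ^ k) ∧
      ((2 - Real.sqrt 2) * (1 + Real.sqrt 2) ^ (k - 1) ≤ μ k - μ (k - 1)) := by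
  set s := Real.sqrt 2 with hsdef
  have hs0 := Stmt7Aux.hs0
  have hs2 := Stmt7Aux.hs2
  have hs1 := Stmt7Aux.hs1
  have hr0 := Stmt7Aux.hr0
  rw [← hsdef] at hs0 hs2 hs1 hr0
  -- beta (i+1) - 1 = (1+s)^i
  have hbeta1 : ∀ i : ℕ, beta (i + 1) - 1 = (1 + s) ^ i := by
    intro i
    rw [Stmt7Aux.betaEq, pow_succ, ← hsdef]
    linear_combination ((1+s)^i) * hs2
  -- μ in closed-sum form
  have muEq : ∀ i : ℕ, μ (i+1) = 2 * ∑ ℓ ∈ Finset.range (i+1), α ℓ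
      + ((2 + s) * (1 + s) ^ i - 2*(i+1) - s) + 2 := by
    intro i
    rw [hμ (i+1)]
    have h1 : i + 1 - 1 = i := by omega
    have h2 : ∀ ℓ, i + 1 - ℓ - 1 = i - ℓ := by intro ℓ; omega
    simp only [h1, h2]
    rw [Stmt7Aux.sumD, ← hsdef]
  have mu0 : μ 0 = 2 := by rw [hμ 0]; simp
  -- recurrence
  have muRec : ∀ i : ℕ, μ (i+1) = μ i + 2 * α i + 2 * (1 + s) ^ i - 2 := by
    intro i
    cases i with
    | zero =>
        rw [muEq 0, mu0, Finset.sum_range_one]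
        push_cast; ring
    | succ j =>
        rw [muEq (j+1), muEq j, Finset.sum_range_succ, pow_succ]
        push_cast
        linear_combination ((1+s)^j) * hs2
  -- positivity of powers
  have hP : ∀ i : ℕ, (0:ℝ) < (1 + s) ^ i := fun i => pow_pos hr0 i
  -- α upper bound: α i - 1 ≤ (1+s)^i whenever 0 < μ i - 1
  have alphaUp : ∀ i : ℕ, 0 < μ i - 1 → α i - 1 ≤ (1 + s) ^ i := by
    intro i hm
    obtain ⟨ht1, hq⟩ := hα i
    rw [hbeta1 i] at hq
    nlinarith [sq_nonneg (α i - 1), hP i, mul_pos hm (hP i)]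
  -- α lower bound: (s-1)(1+s)^i ≤ α i - 1 whenever s*(1+s)^i ≤ μ i - 1
  have h43 : (4:ℝ)/3 < s := by nlinarith [hs2, hs0]
  have alphaLow : ∀ i : ℕ, s * (1+s)^i ≤ μ i - 1 → (s - 1) * (1 + s) ^ i ≤ α i - 1 := by
    intro i hm
    obtain ⟨ht1, hq⟩ := hα i
    rw [hbeta1 i] at hq
    have hm0 : (0:ℝ) < μ i - 1 := lt_of_lt_of_le (by positivity) hm
    by_contra hcon
    push_neg at hcon
    have ht0 : (0:ℝ) < α i - 1 := by linarith
    have hsq : (α i - 1)^2 < ((s-1)*(1+s)^i)^2 := by nlinarith [hP i]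
    have key1 : (s*(1+s)^i) * ((2-s)*(1+s)^i) ≤ (μ i - 1) * ((2-s)*(1+s)^i) :=
      mul_le_mul_of_nonneg_right hm (by nlinarith [hP i, hs2])
    have key3 : (μ i - 1) * ((2-s)*(1+s)^i) ≤ (μ i - 1) * ((1+s)^i - (α i - 1)) := by
      apply mul_le_mul_of_nonneg_left _ (le_of_lt hm0)
      nlinarith [hP i]
    nlinarith [key1, key3, hsq, hq, mul_pos (hP i) (hP i), hs2]
  -- α 0 = 3/2, μ 1 = 5
  have alpha0 : α 0 = 3/2 := by
    obtain ⟨ht1, hq⟩ := hα 0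
    rw [hbeta1 0, mu0] at hq
    simp only [pow_zero] at hq
    nlinarith [hq, ht1]
  have mu1 : μ 1 = 5 := by
    rw [muEq 0, Finset.sum_range_one, alpha0]; push_cast; ring
  -- main invariant
  have Q : ∀ i : ℕ, 1 ≤ i → s * (1+s)^i ≤ μ i - 1 ∧ μ i - 1 ≤ 2 * s * (1+s)^i := by
    intro i hi
    induction i, hi using Nat.le_induction with
    | base =>
        rw [mu1]; constructor <;> nlinarith [hs2, hs0]
    | succ n hn ih =>
        obtain ⟨ihlo, ihhi⟩ := ih
        have hm0 : (0:ℝ) < μ n - 1 := lt_of_lt_of_le (by positivity) ihlo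
        have htu := alphaUp n hm0
        have ht1 := (hα n).1
        have hrec := muRec n
        constructor
        · rw [pow_succ]; nlinarith [hP n]
        · rw [pow_succ]; nlinarith [hP n]
  -- conclusion
  intro k hk
  obtain ⟨j, rfl⟩ : ∃ j, k = j + 1 := ⟨k - 1, by omega⟩
  obtain ⟨Qlo, Qhi⟩ := Q (j+1) hk
  have hm0 : (0:ℝ) < μ (j+1) - 1 := lt_of_lt_of_le (by positivity) Qlo
  refine ⟨⟨?_, ?_⟩, ⟨?_, ?_⟩, ⟨Qlo, Qhi⟩, ?_⟩
  · -- beta (j+1) ≤ α (j+1)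
    have hlow := alphaLow (j+1) Qlo
    rw [Stmt7Aux.betaEq, ← hsdef]
    linarith
  · -- α (j+1) ≤ beta (j+2)
    have hup := alphaUp (j+1) hm0
    have := hbeta1 (j+1)
    linarith
  · rw [hH]; nlinarith [Qlo]
  · rw [hH]; nlinarith [Qhi]
  · -- (iv)
    have h1 : j + 1 - 1 = j := by omega
    rw [h1]
    have hrec := muRec j
    have ht1 := (hα j).1
    nlinarith [hP j, hs0]
end

section
/- For every integer k ≥ 1, ∏_{i=0}^{2^{k+1}-2} (𝔥^(k)_i - 1) = 1, where 𝔥^(k) is the k-th building block stepsize pattern. -/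
noncomputable def E (x : ℝ) : ℝ := (1 + Real.sqrt 2) ^ x

lemma rr_pos : (0:ℝ) < 1 + Real.sqrt 2 := by positivity

lemma E_add (x y : ℝ) : E (x + y) = E x * E y := Real.rpow_add rr_pos x y

lemma E_zero : E 0 = 1 := Real.rpow_zero _

lemma E_one : E 1 = 1 + Real.sqrt 2 := Real.rpow_one _

lemma E_two : E 2 = 2*(1+Real.sqrt 2)+1 := by
  have h : Real.sqrt 2 ^ 2 = 2 := Real.sq_sqrt (by norm_num)
  have h2 : E 2 = (1+Real.sqrt 2)^(2:ℕ) := by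
    rw [E, ← Real.rpow_natCast]; norm_num
  rw [h2]; nlinarith [h]

lemma E_sq (x : ℝ) : (E x)^2 = E (x + x) := by
  rw [pow_two, ← E_add]

lemma beta_sub (k : ℕ) : beta k - 1 = E ((k:ℝ) - 1) := by
  simp only [beta, E]; ring

noncomputable def Ssum (k : ℕ) : ℝ :=
  ∑ ℓ ∈ Finset.range (k - 1), 2 * ((2 : ℝ) ^ (k - ℓ - 1) - 1) * beta ℓ

noncomputable def Bsum (k : ℕ) : ℝ := ∑ ℓ ∈ Finset.range k, beta ℓ

lemma Ssum_succ (k : ℕ) : Ssum (k+1) = 2 * Ssum k + 2 * Bsum k := by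
  cases k with
  | zero => simp [Ssum, Bsum]
  | succ n =>
    unfold Ssum Bsum
    simp only [Nat.add_sub_cancel]
    have step : ∀ ℓ ∈ Finset.range (n+1),
        2*((2:ℝ)^(n+1+1-ℓ-1)-1)*beta ℓ
          = 2*(2*((2:ℝ)^(n+1-ℓ-1)-1))*beta ℓ + 2*beta ℓ := by
      intro ℓ hℓ
      have hln : ℓ ≤ n := Nat.lt_succ_iff.mp (Finset.mem_range.mp hℓ)
      have e1 : n+1+1-ℓ-1 = (n+1-ℓ-1)+1 := by omega
      rw [e1, pow_succ]; ring
    rw [Finset.sum_congr rfl step, Finset.sum_add_distrib, ← Finset.mul_sum]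
    conv_rhs => rw [Finset.mul_sum]
    rw [Finset.sum_range_succ, show n+1-n-1 = 0 from by omega,
      Finset.sum_congr rfl (fun x _ => by ring :
        ∀ x ∈ Finset.range n, 2*(2*((2:ℝ)^(n+1-x-1)-1))*beta x
          = 2*(2*((2:ℝ)^(n+1-x-1)-1)*beta x))]
    norm_num

lemma Sdiff : ∀ k : ℕ, Ssum (k+1) = Ssum k + 2 * E (k:ℝ) - 2 := by
  intro k; induction k with
  | zero => simp [Ssum, E, Real.rpow_zero]
  | succ k IH =>
    have A := Ssum_succ (k+1)
    have B := Ssum_succ k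
    have C : Bsum (k+1) = Bsum k + beta k := Finset.sum_range_succ _ _
    have D : beta k - 1 = E ((k:ℝ)-1) := beta_sub k
    have h1 : E ((k:ℝ)+1) = E ((k:ℝ)-1) * (2*(1+Real.sqrt 2)+1) := by
      rw [← E_two, ← E_add]; congr 1; ring
    have h2 : E (k:ℝ) = E ((k:ℝ)-1) * (1+Real.sqrt 2) := by
      rw [← E_one, ← E_add]; congr 1; ring
    push_cast
    linear_combination A - B + 2*IH + 2*C + 2*D - 2*h1 + 4*h2

lemma Bprod : ∀ k : ℕ, ∏ i ∈ Finset.range k, (beta i - 1)^2 = E ((k:ℝ)^2 - 3*(k:ℝ)) := by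
  intro k; induction k with
  | zero => norm_num [E, Real.rpow_zero]
  | succ k IH =>
    rw [Finset.prod_range_succ, IH, beta_sub, E_sq, ← E_add]
    congr 1; push_cast; ring

lemma Qprod (k : ℕ) :
    ∏ i ∈ Finset.range (k+1-1), (beta i - 1)^(2*(2^(k+1-i-1)-1))
      = (∏ i ∈ Finset.range (k-1), (beta i - 1)^(2*(2^(k-i-1)-1)))^2
        * ∏ i ∈ Finset.range k, (beta i - 1)^2 := by
  cases k with
  | zero => simp
  | succ n =>
    simp only [Nat.add_sub_cancel]
    have hterm : ∀ i ∈ Finset.range n,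
        (beta i - 1)^(2*(2^(n+1+1-i-1)-1))
          = ((beta i - 1)^(2*(2^(n+1-i-1)-1)))^2 * (beta i - 1)^2 := by
      intro i hi
      have hin : i < n := Finset.mem_range.mp hi
      rw [← pow_mul, ← pow_add]
      congr 1
      rw [show n+1+1-i-1 = (n+1-i-1)+1 from by omega, pow_succ]
      have ht : 0 < 2^(n+1-i-1) := pow_pos (by norm_num) _
      generalize 2^(n+1-i-1) = t at ht ⊢
      omega
    rw [Finset.prod_range_succ, Finset.prod_congr rfl hterm, Finset.prod_mul_distrib,
      Finset.prod_pow, show n+1+1-n-1 = 1 from by omega]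
    rw [Finset.prod_range_succ (fun i => (beta i - 1)^2)]
    norm_num
    ring

lemma Qclosed : ∀ k : ℕ,
    ∏ i ∈ Finset.range (k-1), (beta i - 1)^(2*(2^(k-i-1)-1))
      = E ((k:ℝ) - (k:ℝ)^2) := by
  intro k; induction k with
  | zero => norm_num [E, Real.rpow_zero]
  | succ k IH =>
    rw [Qprod k, IH, Bprod k, E_sq, ← E_add]
    congr 1; push_cast; ring

/-- for every k ≥ 1, the product ∏_{i=0}^{2^{k+1}-2}(𝔥^(k)_i - 1) over
the building block pattern equals 1.  Since each β_i appears 2(2^{k-i-1}-1) times,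
each α_i appears twice, and μ_k appears once, this is equivalently
∏_{i=0}^{k-1}(α_i-1)² · ∏_{i=0}^{k-2}(β_i-1)^{2(2^{k-i-1}-1)} · (μ_k-1) = 1. -/
theorem stmt11 (α μ : ℕ → ℝ)
    (hμ : ∀ i, μ i = 2 * ∑ ℓ ∈ Finset.range i, α ℓ
        + ∑ ℓ ∈ Finset.range (i - 1), 2 * ((2 : ℝ) ^ (i - ℓ - 1) - 1) * beta ℓ + 2)
    (hα : ∀ i, 1 < α i ∧
      2 * (α i - 1) ^ 2 + (μ i - 1) * (α i - 1) - (beta (i + 1) - 1) * (μ i - 1) = 0) :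
    ∀ k : ℕ, 1 ≤ k →
      (∏ i ∈ Finset.range k, (α i - 1) ^ 2) *
        (∏ i ∈ Finset.range (k - 1), (beta i - 1) ^ (2 * (2 ^ (k - i - 1) - 1))) *
        (μ k - 1) = 1 := by
  have hμ0 : μ 0 = 2 := by simpa using hμ 0
  have hrec : ∀ k : ℕ, μ (k+1) - 1 = (μ k - 1) + 2*(α k - 1) + 2 * E (k:ℝ) := by
    intro k
    have e1 : μ (k+1) = 2 * ∑ ℓ ∈ Finset.range (k+1), α ℓ + Ssum (k+1) + 2 := hμ (k+1)
    have e2 : μ k = 2 * ∑ ℓ ∈ Finset.range k, α ℓ + Ssum k + 2 := hμ k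
    have e3 := Sdiff k
    have e4 : ∑ ℓ ∈ Finset.range (k+1), α ℓ = ∑ ℓ ∈ Finset.range k, α ℓ + α k :=
      Finset.sum_range_succ _ _
    linarith
  intro k hk
  induction k, hk using Nat.le_induction with
  | base =>
    have hμ1 : μ 1 = 2 * α 0 + 2 := by simpa using hμ 1
    have hb1 : beta 1 = 2 := by norm_num [beta]
    have q0 := (hα 0).2
    simp only [Nat.zero_add, hμ0, hb1] at q0
    simp only [show (1:ℕ)-1 = 0 from rfl, Finset.prod_range_zero, Finset.prod_range_one,
      mul_one, hμ1]
    linear_combination α 0 * q0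
  | succ k hk IH =>
    have qk := (hα k).2
    have hbk : beta (k+1) - 1 = E (k:ℝ) := by
      rw [beta_sub]; congr 1; push_cast; ring
    rw [hbk] at qk
    have hr := hrec k
    have key : (μ (k+1) - 1) * (α k - 1)^2 = (μ k - 1) * (E (k:ℝ) * E (k:ℝ)) := by
      linear_combination (α k - 1 + E (k:ℝ)) * qk + (α k - 1)^2 * hr
    have hE : E (k:ℝ) * E (k:ℝ) * E ((k:ℝ)+1 - ((k:ℝ)+1)^2) = E ((k:ℝ) - (k:ℝ)^2) := by
      rw [← E_add, ← E_add]; congr 1; ring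
    rw [Qclosed k] at IH
    rw [Finset.prod_range_succ, Qclosed (k+1)]
    push_cast
    linear_combination E ((k:ℝ)+1 - ((k:ℝ)+1)^2) * (∏ i ∈ Finset.range k, (α i - 1)^2) * key
      + (∏ i ∈ Finset.range k, (α i - 1)^2) * (μ k - 1) * hE + IH
end

section
/- Suppose j ∈ [1, 2^k - 1] has binary expansion j = ∑_{a=0}^{z} b_a 2^a with b_z = 1 and each b_a ∈ {0,1}, and let ν(n) denote the 2-adic valuation. Then the set S_j^- = {i < j : i + 2^{ν(i+1)} ≥ j} equals {∑_{a=r}^{z} b_a 2^a - 1 : r ∈ [0,z], b_r = 1}. -/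
open Finset

lemma aux_sum_lt_pow (b : ℕ → ℕ) (hb : ∀ a, b a = 0 ∨ b a = 1) (r : ℕ) :
    ∑ a ∈ range r, b a * 2 ^ a < 2 ^ r := by
  induction r with
  | zero => simp
  | succ n ih =>
    rw [Finset.sum_range_succ, pow_succ]
    have : b n * 2 ^ n ≤ 2 ^ n := by rcases hb n with h | h <;> simp [h]
    omega

lemma aux_split (b : ℕ → ℕ) (z r : ℕ) (h : r ≤ z + 1) :
    ∑ a ∈ range (z + 1), b a * 2 ^ a
      = (∑ a ∈ range r, b a * 2 ^ a) + ∑ a ∈ Finset.Icc r z, b a * 2 ^ a := by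
  rw [Finset.range_eq_Ico, ← Finset.sum_Ico_consecutive _ (Nat.zero_le r) h,
    Finset.Ico_add_one_right_eq_Icc, Finset.range_eq_Ico]

lemma aux_dvd_S (b : ℕ → ℕ) (z r : ℕ) :
    2 ^ r ∣ ∑ a ∈ Finset.Icc r z, b a * 2 ^ a := by
  refine Finset.dvd_sum fun a ha => ?_
  exact Dvd.dvd.mul_left (pow_dvd_pow 2 (Finset.mem_Icc.1 ha).1) _

lemma aux_not_dvd_S (b : ℕ → ℕ) (hb : ∀ a, b a = 0 ∨ b a = 1) (z r : ℕ)
    (hr : r ≤ z) (hbr : b r = 1) :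
    ¬ 2 ^ (r + 1) ∣ ∑ a ∈ Finset.Icc r z, b a * 2 ^ a := by
  intro hdvd
  rw [Finset.Icc_eq_cons_Ioc hr, Finset.sum_cons, hbr, one_mul] at hdvd
  have h2 : 2 ^ (r + 1) ∣ ∑ a ∈ Finset.Ioc r z, b a * 2 ^ a := by
    refine Finset.dvd_sum fun a ha => ?_
    exact Dvd.dvd.mul_left (pow_dvd_pow 2 (Finset.mem_Ioc.1 ha).1) _
  have h3 : 2 ^ (r + 1) ∣ 2 ^ r := by
    have := Nat.dvd_sub hdvd h2
    simpa [add_comm] using this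
  have := Nat.le_of_dvd (by positivity) h3
  have := Nat.pow_lt_pow_right (a := 2) one_lt_two (Nat.lt_succ_self r)
  omega

lemma aux_val_eq (n r : ℕ) (hn : n ≠ 0) (h1 : 2 ^ r ∣ n) (h2 : ¬ 2 ^ (r + 1) ∣ n) :
    padicValNat 2 n = r := by
  have hle : padicValNat 2 n ≤ r := by
    by_contra hlt
    exact h2 ((pow_dvd_pow 2 (by omega)).trans pow_padicValNat_dvd)
  have hge : r ≤ padicValNat 2 n := by
    by_contra hlt
    exact pow_succ_padicValNat_not_dvd (p := 2) hn
      ((pow_dvd_pow 2 (by omega)).trans h1)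
  omega

/-- if j ∈ [1, 2^k - 1] has binary expansion j = ∑_{a=0}^{z} b_a 2^a
with b_z = 1, then S_j^- = {i < j : j ≤ i + 2^{ν(i+1)}} equals
{∑_{a=r}^{z} b_a 2^a - 1 : r ∈ [0,z], b_r = 1}, where ν is the 2-adic valuation. -/
theorem stmt16 (k j z : ℕ) (b : ℕ → ℕ)
    (hj1 : 1 ≤ j) (hj2 : j ≤ 2 ^ k - 1)
    (hb : ∀ a, b a = 0 ∨ b a = 1)
    (hbz : b z = 1)
    (hjexp : j = ∑ a ∈ Finset.range (z + 1), b a * 2 ^ a) :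
    {i : ℕ | i < j ∧ j ≤ i + 2 ^ (padicValNat 2 (i + 1))}
      = {n : ℕ | ∃ r, r ≤ z ∧ b r = 1 ∧
          n = (∑ a ∈ Finset.Icc r z, b a * 2 ^ a) - 1} := by
  ext n
  simp only [Set.mem_setOf_eq]
  constructor
  · rintro ⟨hlt, hge⟩
    set r := padicValNat 2 (n + 1) with hrdef
    have hdvd : 2 ^ r ∣ n + 1 := pow_padicValNat_dvd
    have hnd : ¬ 2 ^ (r + 1) ∣ n + 1 :=
      pow_succ_padicValNat_not_dvd (p := 2) (Nat.succ_ne_zero n)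
    have hjlt : j < 2 ^ (z + 1) := hjexp ▸ aux_sum_lt_pow b hb (z + 1)
    have h2r : 2 ^ r ≤ n + 1 := Nat.le_of_dvd (Nat.succ_pos n) hdvd
    have hrz : r ≤ z := by
      by_contra h
      have : 2 ^ (z + 1) ≤ 2 ^ r := Nat.pow_le_pow_right (by norm_num) (by omega)
      omega
    have hL : j = (∑ a ∈ Finset.range r, b a * 2 ^ a)
        + ∑ a ∈ Finset.Icc r z, b a * 2 ^ a := by
      rw [hjexp]; exact aux_split b z r (by omega)
    have hLlt := aux_sum_lt_pow b hb r
    obtain ⟨p, hp⟩ := hdvd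
    obtain ⟨q, hq⟩ := aux_dvd_S b z r
    have hd1 : j - (n + 1) < 2 ^ r := by omega
    have hj1' : j = 2 ^ r * p + (j - (n + 1)) := by omega
    have hj2' : j = 2 ^ r * q + ∑ a ∈ Finset.range r, b a * 2 ^ a := by omega
    have e1 : j % 2 ^ r = j - (n + 1) := by
      conv_lhs => rw [hj1']
      rw [Nat.mul_add_mod]; exact Nat.mod_eq_of_lt hd1
    have e2 : j % 2 ^ r = ∑ a ∈ Finset.range r, b a * 2 ^ a := by
      rw [hj2', Nat.mul_add_mod]; exact Nat.mod_eq_of_lt hLlt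
    have hmS : n + 1 = ∑ a ∈ Finset.Icc r z, b a * 2 ^ a := by omega
    have hbr : b r = 1 := by
      rcases hb r with h0 | h1
      · exfalso
        apply hnd
        rw [hmS]
        refine Finset.dvd_sum fun a ha => ?_
        rcases eq_or_lt_of_le (Finset.mem_Icc.1 ha).1 with he | hlt'
        · simp [← he, h0]
        · exact Dvd.dvd.mul_left (pow_dvd_pow 2 hlt') _
      · exact h1
    exact ⟨r, hrz, hbr, by omega⟩
  · rintro ⟨r, hrz, hbr, hn⟩
    have hL : j = (∑ a ∈ Finset.range r, b a * 2 ^ a)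
        + ∑ a ∈ Finset.Icc r z, b a * 2 ^ a := by
      rw [hjexp]; exact aux_split b z r (by omega)
    have hLlt := aux_sum_lt_pow b hb r
    set S := ∑ a ∈ Finset.Icc r z, b a * 2 ^ a with hSdef
    have hSpos : 2 ^ r ≤ S := by
      have : b r * 2 ^ r ≤ S :=
        Finset.single_le_sum (f := fun a => b a * 2 ^ a) (fun a _ => Nat.zero_le _)
          (Finset.mem_Icc.2 ⟨le_refl r, hrz⟩)
      simpa [hbr] using this
    have hpow : 0 < 2 ^ r := Nat.pow_pos (by norm_num)
    have hval : padicValNat 2 S = r :=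
      aux_val_eq S r (by omega) (aux_dvd_S b z r) (aux_not_dvd_S b hb z r hrz hbr)
    have hn1 : n + 1 = S := by omega
    refine ⟨by omega, ?_⟩
    rw [hn1, hval]
    omega
end

section
/- Fix integers z and ℓ with 0 ≤ z < ℓ, and suppose 2^z - 1 ≤ j < 2^{z+1} - 1. Define S_j^+ = {i > j : i - j ≤ 2^{ν(i+1)-1}}, where ν(n) is the 2-adic valuation. Then S_{j+2^ℓ}^+ = {2^ℓ + i : i ∈ S_j^+} ∪ {2^{ℓ+1} - 1}. -/
/-- Valuation shift: adding `2^ℓ` doesn't change the 2-adic valuation of `r < 2^ℓ`. -/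
lemma valshift (ℓ r : ℕ) (h0 : 0 < r) (h1 : r < 2 ^ ℓ) :
    padicValNat 2 (2 ^ ℓ + r) = padicValNat 2 r := by
  have inst : Fact (Nat.Prime 2) := ⟨Nat.prime_two⟩
  set v := padicValNat 2 r with hv
  have hdvd : 2 ^ v ∣ r := pow_padicValNat_dvd
  have hvlt : v < ℓ := by
    have h2 : 2 ^ v ≤ r := Nat.le_of_dvd h0 hdvd
    have := lt_of_le_of_lt h2 h1
    exact (Nat.pow_lt_pow_iff_right (by norm_num)).mp this
  have hnd : ¬ 2 ^ (v + 1) ∣ r := pow_succ_padicValNat_not_dvd h0.ne'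
  have hne : (2 ^ ℓ + r) ≠ 0 := by positivity
  have h1' : 2 ^ v ∣ 2 ^ ℓ + r :=
    Dvd.dvd.add (pow_dvd_pow 2 hvlt.le) hdvd
  have h2' : ¬ 2 ^ (v + 1) ∣ 2 ^ ℓ + r := by
    intro h
    exact hnd ((Nat.dvd_add_right (pow_dvd_pow 2 hvlt)).mp h)
  have hle : v ≤ padicValNat 2 (2 ^ ℓ + r) :=
    (padicValNat_dvd_iff_le hne).mp h1'
  have hge : padicValNat 2 (2 ^ ℓ + r) ≤ v := by
    by_contra hc
    push_neg at hc
    exact h2' ((padicValNat_dvd_iff_le hne).mpr hc)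
  omega

/-- Key bound: elements of `S_j^+` are at most `2^(w+1) - 1`. -/
lemma keybound (w j i : ℕ) (hj1 : 2 ^ w - 1 ≤ j) (hj2 : j < 2 ^ (w + 1) - 1)
    (hij : j < i) (h : 2 * (i - j) ≤ 2 ^ padicValNat 2 (i + 1)) :
    i ≤ 2 ^ (w + 1) - 1 := by
  by_contra hc
  push_neg at hc
  set v := padicValNat 2 (i + 1) with hv
  have hdvd : 2 ^ v ∣ i + 1 := pow_padicValNat_dvd
  have hA : 2 ^ (w + 1) = 2 * 2 ^ w := by ring
  rcases le_or_gt v (w + 1) with hle | hlt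
  · -- 2^v divides both i+1 and 2^(w+1), and i+1 > 2^(w+1)
    have hd2 : 2 ^ v ∣ 2 ^ (w + 1) := pow_dvd_pow 2 hle
    have hd3 : 2 ^ v ∣ (i + 1) - 2 ^ (w + 1) := Nat.dvd_sub hdvd hd2
    have hpos : 0 < (i + 1) - 2 ^ (w + 1) := by
      have : 2 ^ (w + 1) ≤ i := by omega
      omega
    have hge : 2 ^ v ≤ (i + 1) - 2 ^ (w + 1) := Nat.le_of_dvd hpos hd3
    have hw1 : (1:ℕ) ≤ 2 ^ w := Nat.one_le_two_pow
    omega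
  · have hge : 2 ^ v ≤ i + 1 := Nat.le_of_dvd (by omega) hdvd
    have h4 : 2 ^ (w + 2) ≤ 2 ^ v := Nat.pow_le_pow_right (by norm_num) hlt
    have hA2 : 2 ^ (w + 2) = 4 * 2 ^ w := by ring
    have hw1 : (1:ℕ) ≤ 2 ^ w := Nat.one_le_two_pow
    omega

/-- with S_j^+ = {i > j : i - j ≤ 2^{ν(i+1)-1}} (expressed as
2(i - j) ≤ 2^{ν(i+1)} to avoid the degenerate exponent ν(i+1) - 1 when ν(i+1)=0),
if 0 ≤ z < ℓ and 2^z - 1 ≤ j < 2^{z+1} - 1, then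
S_{j+2^ℓ}^+ = {2^ℓ + i : i ∈ S_j^+} ∪ {2^{ℓ+1} - 1}. -/
theorem stmt17 (z ℓ j : ℕ) (hzℓ : z < ℓ)
    (hj1 : 2 ^ z - 1 ≤ j) (hj2 : j < 2 ^ (z + 1) - 1) :
    {i : ℕ | j + 2 ^ ℓ < i ∧ 2 * (i - (j + 2 ^ ℓ)) ≤ 2 ^ (padicValNat 2 (i + 1))}
      = ((fun i => 2 ^ ℓ + i) ''
            {i : ℕ | j < i ∧ 2 * (i - j) ≤ 2 ^ (padicValNat 2 (i + 1))})
          ∪ {2 ^ (ℓ + 1) - 1} := by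
  haveI : Fact (Nat.Prime 2) := ⟨Nat.prime_two⟩
  have hz1 : (1:ℕ) ≤ 2 ^ z := Nat.one_le_two_pow
  have hzle : 2 ^ (z + 1) ≤ 2 ^ ℓ := Nat.pow_le_pow_right (by norm_num) hzℓ
  have hℓ1 : (1:ℕ) ≤ 2 ^ ℓ := Nat.one_le_two_pow
  have hE : 2 ^ (ℓ + 1) = 2 * 2 ^ ℓ := by ring
  have hz2 : 2 ^ (z + 1) = 2 * 2 ^ z := by ring
  ext i
  simp only [Set.mem_setOf_eq, Set.mem_union, Set.mem_image, Set.mem_singleton_iff]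
  constructor
  · rintro ⟨hgt, hle⟩
    -- i ≤ 2^(ℓ+1) - 1 by keybound with w := ℓ, j := j + 2^ℓ
    have hb : i ≤ 2 ^ (ℓ + 1) - 1 := by
      refine keybound ℓ (j + 2 ^ ℓ) i (by omega) (by omega) hgt hle
    rcases eq_or_lt_of_le hb with heq | hlt
    · right; omega
    · left
      refine ⟨i - 2 ^ ℓ, ⟨by omega, ?_⟩, by omega⟩
      have hsh : padicValNat 2 (i + 1) = padicValNat 2 (i - 2 ^ ℓ + 1) := by
        have : (2 ^ ℓ + (i - 2 ^ ℓ + 1)) = i + 1 := by omega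
        rw [← this, valshift ℓ (i - 2 ^ ℓ + 1) (by omega) (by omega)]
      rw [← hsh]
      omega
  · rintro (⟨x, ⟨hgt, hle⟩, hx⟩ | heq)
    · -- x ∈ S_j^+, so x ≤ 2^(z+1) - 1 ≤ 2^ℓ - 1
      have hb : x ≤ 2 ^ (z + 1) - 1 := keybound z j x hj1 hj2 hgt hle
      subst hx
      refine ⟨by omega, ?_⟩
      rcases eq_or_lt_of_le hb with heqx | hltx
      · -- x + 1 = 2^(z+1); if z+1 = ℓ then valuation jumps up, fine
        have hx1 : x + 1 = 2 ^ (z + 1) := by omega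
        have hxval : padicValNat 2 (x + 1) = z + 1 := by
          rw [hx1]; exact padicValNat.prime_pow (z + 1)
        rcases lt_or_eq_of_le (Nat.succ_le_of_lt hzℓ) with hlt2 | heq2
        · have : x + 1 < 2 ^ ℓ := by
            have := Nat.pow_le_pow_right (show 1 ≤ 2 by norm_num) hlt2
            calc x + 1 = 2 ^ (z+1) := hx1
              _ < 2 ^ (z + 2) := by
                have : 2 ^ (z+2) = 2 * 2 ^ (z+1) := by ring
                omega
              _ ≤ 2 ^ ℓ := this
          have hsh := valshift ℓ (x + 1) (by omega) this
          have : 2 ^ ℓ + x + 1 = 2 ^ ℓ + (x + 1) := by omega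
          rw [this, hsh]
          omega
        · -- z + 1 = ℓ: 2^ℓ + x + 1 = 2^(ℓ+1), valuation ℓ+1 ≥ z+1
          have hx2 : 2 ^ ℓ + x + 1 = 2 ^ (ℓ + 1) := by
            have h9 : 2 ^ (z + 1) = 2 ^ ℓ := by rw [show z + 1 = ℓ from heq2]
            omega
          have : padicValNat 2 (2 ^ ℓ + x + 1) = ℓ + 1 := by
            rw [hx2]; exact padicValNat.prime_pow (ℓ + 1)
          rw [this]
          have : 2 ^ padicValNat 2 (x + 1) ≤ 2 ^ (ℓ + 1) :=
            Nat.pow_le_pow_right (by norm_num) (by rw [hxval]; omega)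
          omega
      · -- x + 1 < 2^(z+1) ≤ 2^ℓ: valuation unchanged
        have hsh := valshift ℓ (x + 1) (by omega) (by omega)
        have heq3 : 2 ^ ℓ + x + 1 = 2 ^ ℓ + (x + 1) := by omega
        rw [heq3, hsh]
        omega
    · subst heq
      have hval : padicValNat 2 (2 ^ (ℓ + 1) - 1 + 1) = ℓ + 1 := by
        have : 2 ^ (ℓ + 1) - 1 + 1 = 2 ^ (ℓ + 1) := by omega
        rw [this]; exact padicValNat.prime_pow (ℓ + 1)
      rw [hval]
      constructor <;> omega
end
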